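/- Every reduction sequence from a statement in the clocked fragment terminates: the reduction relation → is well-founded (strongly normalizing). Consequently (together with local confluence) every statement has a unique normal form. -/

import Mathlib

/-- Statements of the clocked X10 fragment (loops omitted/unrolled);
`Basic` also plays the role of skip. -/
inductive Stmt : Type
  | Basic : Stmt
  | Advance : Stmt
  | Seq : Stmt → Stmt → Stmt
  | Async : Stmt → Stmt
  | Finish : Stmt → Stmt

/-- A statement is asynchronous. -/
inductive isAsync : Stmt → Prop
  | async (s : Stmt) : isAsync (Stmt.Async s)
  | seq {s t : Stmt} : isAsync s → isAsync t → isAsync (Stmt.Seq s t)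

/-- A statement is synchronous. -/
inductive isSync : Stmt → Prop
  | basic : isSync Stmt.Basic
  | advance : isSync Stmt.Advance
  | finish (s : Stmt) : isSync (Stmt.Finish s)
  | seqL {s : Stmt} (t : Stmt) : isSync s → isSync (Stmt.Seq s t)
  | seqR (s : Stmt) {t : Stmt} : isSync t → isSync (Stmt.Seq s t)

/-- A statement is stuck: every activated sub-statement is an advance. -/
inductive stuck : Stmt → Prop
  | advance : stuck Stmt.Advance
  | async {s : Stmt} : stuck s → stuck (Stmt.Async s)
  | seqSync {s : Stmt} (t : Stmt) : isSync s → stuck s → stuck (Stmt.Seq s t)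
  | seqAsync {s t : Stmt} : isAsync s → stuck s → stuck t → stuck (Stmt.Seq s t)

/-- Clock step relation: `s ⟹ t`, replacing the initial advances by skips. -/
inductive Derives : Stmt → Stmt → Prop
  | advance : Derives Stmt.Advance Stmt.Basic
  | basic : Derives Stmt.Basic Stmt.Basic
  | async {s t : Stmt} : Derives s t → Derives (Stmt.Async s) (Stmt.Async t)
  | seqSync {s t : Stmt} (u : Stmt) : isSync s → Derives s t →
      Derives (Stmt.Seq s u) (Stmt.Seq t u)
  | seqAsync {s s' t t' : Stmt} : isAsync s → Derives s s' → Derives t t' →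
      Derives (Stmt.Seq s t) (Stmt.Seq s' t')

mutual
/-- Heap-free reduction to a statement, including the clock rule. -/
inductive Step : Stmt → Stmt → Prop
  | async {s s' : Stmt} : Step s s' → Step (Stmt.Async s) (Stmt.Async s')
  | finish {s s' : Stmt} : Step s s' → Step (Stmt.Finish s) (Stmt.Finish s')
  | seqL {s s' : Stmt} (t : Stmt) : Step s s' → Step (Stmt.Seq s t) (Stmt.Seq s' t)
  | seqLDone {s : Stmt} (t : Stmt) : StepDone s → Step (Stmt.Seq s t) t
  | seqR {s t t' : Stmt} : isAsync s → Step t t' → Step (Stmt.Seq s t) (Stmt.Seq s t')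
  | seqRDone {s t : Stmt} : isAsync s → StepDone t → Step (Stmt.Seq s t) s
  | clock {s t : Stmt} : stuck s → Derives s t → Step (Stmt.Finish s) (Stmt.Finish t)

/-- Heap-free reduction to a terminated configuration. -/
inductive StepDone : Stmt → Prop
  | basic : StepDone Stmt.Basic
  | async {s : Stmt} : StepDone s → StepDone (Stmt.Async s)
  | finish {s : Stmt} : StepDone s → StepDone (Stmt.Finish s)
end

/-- Configurations: a statement still to execute, or `none` for termination. -/
inductive StepC : Option Stmt → Option Stmt → Prop
  | step {s t : Stmt} : Step s t → StepC (some s) (some t)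
  | done {s : Stmt} : StepDone s → StepC (some s) none

/-! The measure `(advances, basics)`, ordered lexicographically, strictly decreases along every
step: congruence steps inherit the decrease of their premise, dropping a terminated component
loses a basic statement, and a clock step turns at least one advance into a basic statement.
Termination then upgrades local confluence to confluence (Newman's lemma), and a confluent
relation has at most one normal form reachable from each configuration. -/

open Relation

section Newman

variable {α : Type*} {r : α → α → Prop}

theorem Relation.ReflTransGen.eq_of_normal {a b : α} (h : ReflTransGen r a b)
    (ha : ¬ ∃ c, r a c) : a = b := by
  rcases h.cases_head with rfl | ⟨c, hac, -⟩
  · rfl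
  · exact absurd ⟨c, hac⟩ ha

theorem Relation.newman (hwf : WellFounded fun a b => r b a)
    (hlocal : ∀ {a b c}, r a b → r a c → Join (ReflTransGen r) b c) {a b c : α}
    (hb : ReflTransGen r a b) (hc : ReflTransGen r a c) : Join (ReflTransGen r) b c := by
  induction a using hwf.induction generalizing b c with
  | _ a ih =>
    rcases hb.cases_head with rfl | ⟨b₁, hab₁, hb₁⟩
    · exact ⟨c, hc, .refl⟩
    rcases hc.cases_head with rfl | ⟨c₁, hac₁, hc₁⟩
    · exact ⟨b, .refl, .head hab₁ hb₁⟩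
    obtain ⟨e, hb₁e, hc₁e⟩ := hlocal hab₁ hac₁
    obtain ⟨f, hbf, hef⟩ := ih b₁ hab₁ hb₁ hb₁e
    obtain ⟨g, hfg, hcg⟩ := ih c₁ hac₁ (hc₁e.trans hef) hc₁
    exact ⟨g, hbf.trans hfg, hcg⟩

end Newman

namespace Stmt

def advanceCount : Stmt → ℕ
  | Basic => 0
  | Advance => 1
  | Seq s t => s.advanceCount + t.advanceCount
  | Async s => s.advanceCount
  | Finish s => s.advanceCount

def basicCount : Stmt → ℕ
  | Basic => 1
  | Advance => 0
  | Seq s t => s.basicCount + t.basicCount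
  | Async s => s.basicCount
  | Finish s => s.basicCount

def measure (s : Stmt) : ℕ ×ₗ ℕ := toLex (s.advanceCount, s.basicCount)

end Stmt

open Stmt

theorem isAsync.not_isSync {s : Stmt} (ha : isAsync s) : ¬ isSync s := by
  induction ha with
  | async => nofun
  | seq _ _ ih₁ ih₂ => rintro (⟨_, hs⟩ | ⟨_, hs⟩) <;> contradiction

theorem stuck.advanceCount_lt_of_derives {s t : Stmt} (hs : stuck s) (h : Derives s t) :
    t.advanceCount < s.advanceCount := by
  induction h with
  | advance => exact Nat.one_pos
  | basic => nomatch hs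
  | async _ ih =>
    obtain _ | ⟨hs⟩ := hs
    exact ih hs
  | seqSync _ hsync _ ih =>
    obtain _ | _ | ⟨_, _, hs⟩ | ⟨ha, _, _⟩ := hs
    · exact Nat.add_lt_add_right (ih hs) _
    · exact absurd hsync ha.not_isSync
  | seqAsync ha _ _ ih₁ ih₂ =>
    obtain _ | _ | ⟨_, hsync, _⟩ | ⟨_, hs₁, hs₂⟩ := hs
    · exact absurd hsync ha.not_isSync
    · exact Nat.add_lt_add (ih₁ hs₁) (ih₂ hs₂)

theorem StepDone.measure_eq : ∀ {s : Stmt}, StepDone s → s.measure = toLex (0, 1)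
  | _, .basic => rfl
  | _, .async h => h.measure_eq
  | _, .finish h => h.measure_eq

theorem StepDone.measure_pos {s : Stmt} (h : StepDone s) : 0 < s.measure :=
  h.measure_eq ▸ Prod.Lex.toLex_lt_toLex.2 (.inr ⟨rfl, Nat.one_pos⟩)

theorem Step.measure_lt : ∀ {s t : Stmt}, Step s t → t.measure < s.measure
  | _, _, .async h => h.measure_lt
  | _, _, .finish h => h.measure_lt
  | _, _, .seqL t h => (add_lt_add_iff_right t.measure).2 h.measure_lt
  | _, _, .seqLDone _ h => lt_add_of_pos_left _ h.measure_pos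
  | _, _, .seqR (s := s) _ h => (add_lt_add_iff_left s.measure).2 h.measure_lt
  | _, _, .seqRDone _ h => lt_add_of_pos_right _ h.measure_pos
  | _, _, .clock (s := s) (t := t) hs hd =>
    show t.measure < s.measure from Prod.Lex.toLex_lt_toLex.2 (.inl (hs.advanceCount_lt_of_derives hd))

def configMeasure : Option Stmt → WithBot (ℕ ×ₗ ℕ)
  | none => ⊥
  | some s => s.measure

theorem StepC.configMeasure_lt {a b : Option Stmt} : StepC a b → configMeasure b < configMeasure a
  | .step h => WithBot.coe_lt_coe.2 h.measure_lt
  | .done _ => WithBot.bot_lt_coe _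

theorem wellFounded_stepC : WellFounded fun a b : Option Stmt => StepC b a :=
  Subrelation.wf StepC.configMeasure_lt (InvImage.wf configMeasure wellFounded_lt)

theorem stuck.not_stepDone {s : Stmt} (hs : stuck s) : ¬ StepDone s := by
  induction hs with
  | async _ ih => rintro (_ | ⟨h⟩); exact ih h
  | _ => nofun

theorem stuck.not_step {s t : Stmt} (hs : stuck s) : ¬ Step s t := by
  induction hs generalizing t with
  | advance => nofun
  | async _ ih => rintro ⟨h⟩; exact ih h
  | seqSync _ hsync hs ih =>
    rintro (_ | _ | ⟨_, h⟩ | ⟨_, h⟩ | ⟨ha⟩ | ⟨ha⟩ | _)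
    exacts [ih h, hs.not_stepDone h, ha.not_isSync hsync, ha.not_isSync hsync]
  | seqAsync _ hs₁ hs₂ ih₁ ih₂ =>
    rintro (_ | _ | ⟨_, h⟩ | ⟨_, h⟩ | ⟨_, h⟩ | ⟨_, h⟩ | _)
    exacts [ih₁ h, hs₁.not_stepDone h, ih₂ h, hs₂.not_stepDone h]

theorem StepDone.not_step : ∀ {s t : Stmt}, StepDone s → ¬ Step s t
  | _, _, .async h, .async h' => h.not_step h'
  | _, _, .finish h, .finish h' => h.not_step h'
  | _, _, .finish h, .clock hs _ => hs.not_stepDone h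

theorem isAsync.step {s t : Stmt} (ha : isAsync s) (h : Step s t) : isAsync t := by
  induction ha generalizing t with
  | async s => obtain _ | ⟨⟩ := h; exact .async _
  | seq ha₁ ha₂ ih₁ ih₂ =>
    obtain _ | _ | ⟨_, h⟩ | _ | ⟨_, h⟩ | _ | _ := h
    exacts [.seq (ih₁ h) ha₂, ha₂, .seq ha₁ (ih₂ h), ha₁]

theorem Derives.right_unique {s t₁ t₂ : Stmt} (h₁ : Derives s t₁) (h₂ : Derives s t₂) :
    t₁ = t₂ := by
  induction h₁ generalizing t₂ with
  | advance | basic => cases h₂; rfl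
  | async _ ih => obtain _ | _ | ⟨h₂⟩ := h₂; rw [ih h₂]
  | seqSync _ hsync _ ih =>
    obtain _ | _ | _ | ⟨_, _, h₂⟩ | ⟨ha, _, _⟩ := h₂
    · rw [ih h₂]
    · exact absurd hsync ha.not_isSync
  | seqAsync ha _ _ ih₁ ih₂ =>
    obtain _ | _ | _ | ⟨_, hsync, _⟩ | ⟨_, h₂₁, h₂₂⟩ := h₂
    · exact absurd hsync ha.not_isSync
    · rw [ih₁ h₂₁, ih₂ h₂₂]

/-- `result` is the configuration reached once the statement in the hole terminates. -/
structure ReductionContext where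
  plug : Stmt → Stmt
  result : Option Stmt
  step_plug : ∀ {s t : Stmt}, Step s t → Step (plug s) (plug t)
  stepC_of_stepDone : ∀ {s : Stmt}, StepDone s → StepC (some (plug s)) result

namespace ReductionContext

variable (E : ReductionContext)

def plugC : Option Stmt → Option Stmt
  | none => E.result
  | some s => some (E.plug s)

theorem stepC_plugC {a b : Option Stmt} : StepC a b → StepC (E.plugC a) (E.plugC b)
  | .step h => .step (E.step_plug h)
  | .done h => E.stepC_of_stepDone h

theorem join_plugC {a b : Option Stmt} (h : Join (ReflTransGen StepC) a b) :
    Join (ReflTransGen StepC) (E.plugC a) (E.plugC b) :=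
  let ⟨c, hac, hbc⟩ := h
  ⟨E.plugC c, hac.lift E.plugC fun _ _ => E.stepC_plugC, hbc.lift E.plugC fun _ _ => E.stepC_plugC⟩

def async : ReductionContext := ⟨Async, none, .async, .done ∘ .async⟩

def finish : ReductionContext := ⟨Finish, none, .finish, .done ∘ .finish⟩

def seqL (t : Stmt) : ReductionContext := ⟨(Seq · t), some t, .seqL t, .step ∘ .seqLDone t⟩

def seqR {s : Stmt} (ha : isAsync s) : ReductionContext :=
  ⟨Seq s, some s, .seqR ha, .step ∘ .seqRDone ha⟩

end ReductionContext

theorem join_seq_of_isAsync {s t : Stmt} {a b : Option Stmt} (ha : isAsync s)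
    (h₁ : StepC (some s) a) (h₂ : StepC (some t) b) :
    Join (ReflTransGen StepC) ((ReductionContext.seqL t).plugC a)
      ((ReductionContext.seqR ha).plugC b) := by
  obtain h₁ | h₁ := h₁ <;> obtain h₂ | h₂ := h₂
  · exact ⟨_, .single (.step (.seqR (ha.step h₁) h₂)), .single (.step (.seqL _ h₁))⟩
  · exact ⟨_, .single (.step (.seqRDone (ha.step h₁) h₂)), .single (.step h₁)⟩
  · exact ⟨_, .single (.step h₂), .single (.step (.seqLDone _ h₁))⟩
  · exact ⟨none, .single (.done h₂), .single (.done h₁)⟩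

theorem Step.joinable : ∀ {s t u : Stmt}, Step s t → Step s u →
    Join (ReflTransGen StepC) (some t) (some u)
  | _, _, _, .async h₁, .async h₂ => ReductionContext.async.join_plugC (h₁.joinable h₂)
  | _, _, _, .finish h₁, .finish h₂ => ReductionContext.finish.join_plugC (h₁.joinable h₂)
  | _, _, _, .seqL t h₁, .seqL _ h₂ => (ReductionContext.seqL t).join_plugC (h₁.joinable h₂)
  | _, _, _, .seqR ha h₁, .seqR _ h₂ => (ReductionContext.seqR ha).join_plugC (h₁.joinable h₂)
  | _, _, _, .clock _ hd₁, .clock _ hd₂ => hd₁.right_unique hd₂ ▸ ⟨_, .refl, .refl⟩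
  | _, _, _, .seqLDone _ _, .seqLDone _ _ | _, _, _, .seqRDone _ _, .seqRDone _ _ =>
    ⟨_, .refl, .refl⟩
  | _, _, _, .seqL _ h₁, .seqR ha h₂ => join_seq_of_isAsync ha (.step h₁) (.step h₂)
  | _, _, _, .seqL _ h₁, .seqRDone ha h₂ => join_seq_of_isAsync ha (.step h₁) (.done h₂)
  | _, _, _, .seqLDone _ h₁, .seqR ha h₂ => join_seq_of_isAsync ha (.done h₁) (.step h₂)
  | _, _, _, .seqLDone _ h₁, .seqRDone ha h₂ => join_seq_of_isAsync ha (.done h₁) (.done h₂)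
  | _, _, _, .seqR ha h₁, .seqL _ h₂ =>
    symm_of (Join (ReflTransGen StepC)) (join_seq_of_isAsync ha (.step h₂) (.step h₁))
  | _, _, _, .seqR ha h₁, .seqLDone _ h₂ =>
    symm_of (Join (ReflTransGen StepC)) (join_seq_of_isAsync ha (.done h₂) (.step h₁))
  | _, _, _, .seqRDone ha h₁, .seqL _ h₂ =>
    symm_of (Join (ReflTransGen StepC)) (join_seq_of_isAsync ha (.step h₂) (.done h₁))
  | _, _, _, .seqRDone ha h₁, .seqLDone _ h₂ =>
    symm_of (Join (ReflTransGen StepC)) (join_seq_of_isAsync ha (.done h₂) (.done h₁))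
  | _, _, _, .finish h₁, .clock hs _ | _, _, _, .clock hs _, .finish h₁ => absurd h₁ hs.not_step
  | _, _, _, .seqL _ h₁, .seqLDone _ hd | _, _, _, .seqLDone _ hd, .seqL _ h₁
  | _, _, _, .seqR _ h₁, .seqRDone _ hd | _, _, _, .seqRDone _ hd, .seqR _ h₁ =>
    absurd h₁ hd.not_step

theorem StepC.joinable {a b c : Option Stmt} : StepC a b → StepC a c →
    Join (ReflTransGen StepC) b c
  | .step h₁, .step h₂ => h₁.joinable h₂
  | .step h, .done hd | .done hd, .step h => absurd h hd.not_step
  | .done _, .done _ => ⟨none, .refl, .refl⟩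

/-- The reduction relation is strongly normalizing, and together with local
confluence every configuration has a unique normal form. -/
theorem strong_normalization_and_unique_normal_form :
    WellFounded (fun a b : Option Stmt => StepC b a) ∧
    ∀ c n₁ n₂ : Option Stmt,
      Relation.ReflTransGen StepC c n₁ → Relation.ReflTransGen StepC c n₂ →
      (¬ ∃ d, StepC n₁ d) → (¬ ∃ d, StepC n₂ d) → n₁ = n₂ := by
  refine ⟨wellFounded_stepC, fun c n₁ n₂ h₁ h₂ hn₁ hn₂ => ?_⟩
  obtain ⟨d, hd₁, hd₂⟩ := newman wellFounded_stepC StepC.joinable h₁ h₂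
  rw [hd₁.eq_of_normal hn₁, hd₂.eq_of_normal hn₂]
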